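/- arXiv:2011.00239 — 6 statements merged into one kernel-verified Lean document; each statement's English description precedes it below -/
import Mathlib

section
/- Let K ≥ 2 be a natural number. Then (1/K) + (1/K)·∑_{t=1}^{2K-3} ∏_{j=1}^{t} (K − 1 − ⌊j/2⌋)/K ≤ 1/K + √(π/K). -/
/-!
Writing each factor as `1 - (1 + ⌊j/2⌋)/K ≤ exp (-(1 + ⌊j/2⌋)/K)` and using
`∑_{j ≤ t} (1 + ⌊j/2⌋) ≥ t²/4`, the `t`-th product is at most `exp (-t²/(4K))`.
The sum of these Gaussian terms over `t ≥ 1` is bounded by `∫₀^∞ exp (-x²/(4K)) dx = √(πK)`.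
-/

open Real Finset MeasureTheory

theorem Finset.prod_one_sub_le_exp_neg_sum {ι : Type*} {s : Finset ι} {a : ι → ℝ}
    (ha : ∀ i ∈ s, a i ≤ 1) : ∏ i ∈ s, (1 - a i) ≤ exp (-∑ i ∈ s, a i) := by
  rw [← sum_neg_distrib, exp_sum]
  exact prod_le_prod (fun i hi ↦ sub_nonneg.2 (ha i hi)) fun i _ ↦ one_sub_le_exp_neg (a i)

theorem sum_Icc_exp_neg_mul_sq_le {b : ℝ} (hb : 0 < b) (N : ℕ) :
    ∑ t ∈ Icc 1 N, exp (-b * (t : ℝ) ^ 2) ≤ √(π / b) / 2 := by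
  set f : ℝ → ℝ := fun x ↦ exp (-b * x ^ 2)
  have hf : AntitoneOn f (Set.Ici 0) := fun x hx y _ hxy ↦
    exp_le_exp.2 <| by nlinarith [mul_le_mul hxy hxy (Set.mem_Ici.1 hx) (hx.out.trans hxy)]
  have hsum : ∑ t ∈ Icc 1 N, f t = ∑ i ∈ range N, f (0 + ↑(i + 1)) := by
    simp only [zero_add]
    rw [range_eq_Ico, sum_Ico_add' (fun t : ℕ ↦ f t) 0 N 1, zero_add, Ico_add_one_right_eq_Icc]
  calc ∑ t ∈ Icc 1 N, f t
      ≤ ∫ x in (0 : ℝ)..0 + N, f x := hsum ▸ (hf.mono Set.Icc_subset_Ici_self).sum_le_integral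
    _ = ∫ x in Set.Ioc 0 (N : ℝ), f x := by rw [zero_add, intervalIntegral.integral_of_le N.cast_nonneg]
    _ ≤ ∫ x in Set.Ioi 0, f x :=
        setIntegral_mono_set (integrable_exp_neg_mul_sq hb).integrableOn
          (.of_forall fun x ↦ (exp_pos _).le) Set.Ioc_subset_Ioi_self.eventuallyLE
    _ = √(π / b) / 2 := integral_gaussian_Ioi b

theorem sq_le_four_mul_sum_one_add_half (t : ℕ) : t ^ 2 ≤ 4 * ∑ j ∈ Icc 1 t, (1 + j / 2) := by
  induction t with
  | zero => simp
  | succ n ih =>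
    rw [sum_Icc_succ_top (by omega)]
    nlinarith [show n ≤ 2 * ((n + 1) / 2) by omega]

theorem prod_Icc_sub_half_div_le_exp {K t : ℕ} (hK : 2 ≤ K) (ht : t ≤ 2 * K - 3) :
    ∏ j ∈ Icc 1 t, ((K : ℝ) - 1 - ((j / 2 : ℕ) : ℝ)) / K ≤ exp (-(1 / (4 * K)) * (t : ℝ) ^ 2) := by
  have hK0 : (0 : ℝ) < K := by positivity
  have hfactor : ∀ j : ℕ, ((K : ℝ) - 1 - ((j / 2 : ℕ) : ℝ)) / K = 1 - (1 + ((j / 2 : ℕ) : ℝ)) / K :=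
    fun j ↦ by field_simp; ring
  simp only [hfactor]
  refine (prod_one_sub_le_exp_neg_sum fun j hj ↦ ?_).trans (exp_le_exp.2 ?_)
  · have : ((j / 2 : ℕ) : ℝ) + 2 ≤ K := by
      exact_mod_cast (show j / 2 + 2 ≤ K by have := (mem_Icc.1 hj).2; omega)
    rw [div_le_one hK0]
    linarith
  · have hcount : (t : ℝ) ^ 2 ≤ 4 * ∑ j ∈ Icc 1 t, (1 + ((j / 2 : ℕ) : ℝ)) := by
      exact_mod_cast sq_le_four_mul_sum_one_add_half t
    rw [← sum_div, neg_mul, neg_le_neg_iff, div_mul_eq_mul_div, one_mul, div_le_div_iff₀ (by positivity) hK0]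
    nlinarith

/-- For `K ≥ 2`,
`1/K + (1/K) ∑_{t=1}^{2K-3} ∏_{j=1}^{t} (K − 1 − ⌊j/2⌋)/K ≤ 1/K + √(π/K)`. -/
theorem stmt_2 (K : ℕ) (hK : 2 ≤ K) :
    1 / (K : ℝ) + (1 / (K : ℝ)) *
        ∑ t ∈ Finset.Icc 1 (2 * K - 3),
          ∏ j ∈ Finset.Icc 1 t, ((K : ℝ) - 1 - ((j / 2 : ℕ) : ℝ)) / (K : ℝ)
      ≤ 1 / (K : ℝ) + Real.sqrt (Real.pi / (K : ℝ)) := by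
  have hK0 : (0 : ℝ) < K := by positivity
  have hgauss : √(π / (1 / (4 * K))) / 2 = K * √(π / K) := by
    rw [div_div_eq_mul_div, div_one, show π * (4 * K) = (2 * K) ^ 2 * (π / K) by field_simp; ring,
      sqrt_mul (by positivity), sqrt_sq (by positivity)]
    ring
  calc _ ≤ 1 / (K : ℝ) + 1 / K * ∑ t ∈ Icc 1 (2 * K - 3), exp (-(1 / (4 * K)) * (t : ℝ) ^ 2) := by
        gcongr with t ht
        exact prod_Icc_sub_half_div_le_exp hK (mem_Icc.1 ht).2
    _ ≤ 1 / (K : ℝ) + 1 / K * (√(π / (1 / (4 * K))) / 2) := by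
        gcongr
        exact sum_Icc_exp_neg_mul_sq_le (by positivity) _
    _ = 1 / (K : ℝ) + √(π / K) := by rw [hgauss]; field_simp
end

section
/- Let K and m be natural numbers with 1 ≤ m ≤ K, and let c = (c_1, …, c_K) be a vector of natural numbers with 0 ≤ c_i ≤ m for all i. Set ℓ(c) = ∑_{i=1}^K c_i. Then ∏_{i=1}^K c_i!·(K − c_i)! ≤ (m!)^{⌊ℓ(c)/m⌋} · ((K − m)!)^{⌊ℓ(c)/m⌋} · (K!)^{K − ⌊ℓ(c)/m⌋}. -/
open Nat Finset

/-- `c! (K-m)^c ≤ (m+1)^c ⋅ K.descFactorial c` for `c ≤ m < K`. -/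
lemma aux_desc (K m : ℕ) (hmK : m < K) :
    ∀ c : ℕ, c ≤ m →
      c.factorial * (K - m) ^ c ≤ (m + 1) ^ c * K.descFactorial c := by
  intro c
  induction c with
  | zero => simp
  | succ n ih =>
    intro h
    have hn : n ≤ m := Nat.le_of_succ_le h
    have ih' := ih hn
    rw [Nat.factorial_succ, Nat.pow_succ, Nat.descFactorial_succ, Nat.pow_succ]
    calc (n + 1) * n.factorial * ((K - m) ^ n * (K - m))
        = ((n + 1) * (K - m)) * (n.factorial * (K - m) ^ n) := by ring
      _ ≤ ((m + 1) * (K - n)) * ((m + 1) ^ n * K.descFactorial n) := by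
          apply Nat.mul_le_mul _ ih'
          apply Nat.mul_le_mul (by omega) (by omega)
      _ = (m + 1) ^ n * (m + 1) * ((K - n) * K.descFactorial n) := by ring

/-- step lemma: `c!(K-c)!(K-m)^c ≤ (m+1)^c K!` for `c ≤ m < K`. -/
lemma aux_step (K m c : ℕ) (hc : c ≤ m) (hmK : m < K) :
    c.factorial * (K - c).factorial * (K - m) ^ c
      ≤ (m + 1) ^ c * K.factorial := by
  have hcK : c ≤ K := le_of_lt (lt_of_le_of_lt hc hmK)
  have hdesc := Nat.factorial_mul_descFactorial hcK
  calc c.factorial * (K - c).factorial * (K - m) ^ c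
      = (K - c).factorial * (c.factorial * (K - m) ^ c) := by ring
    _ ≤ (K - c).factorial * ((m + 1) ^ c * K.descFactorial c) :=
        Nat.mul_le_mul_left _ (aux_desc K m hmK c hc)
    _ = (m + 1) ^ c * ((K - c).factorial * K.descFactorial c) := by ring
    _ = (m + 1) ^ c * K.factorial := by rw [hdesc]

/-- key lemma: `(c!(K-c)!)^m ≤ (m!(K-m)!)^c ⋅ (K!)^(m-c)` for `c ≤ m ≤ K`. -/
lemma aux_key (K : ℕ) : ∀ m, ∀ c, c ≤ m → m ≤ K →
    (c.factorial * (K - c).factorial) ^ m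
      ≤ (m.factorial * (K - m).factorial) ^ c * K.factorial ^ (m - c) := by
  intro m
  induction m with
  | zero =>
    intro c hc _
    interval_cases c
    simp
  | succ n ih =>
    intro c hc hK
    rcases Nat.eq_or_lt_of_le hc with h | h
    · subst h
      simp
    · -- c ≤ n, n + 1 ≤ K
      have hc' : c ≤ n := Nat.lt_succ_iff.mp h
      have hnK : n < K := lt_of_lt_of_le (Nat.lt_succ_self n) hK
      have ih' := ih c hc' (le_of_lt hnK)
      have hstep := aux_step K n c hc' hnK
      have hfac : (K - n).factorial = (K - n) * (K - (n + 1)).factorial := by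
        have : K - n = (K - (n + 1)) + 1 := by omega
        rw [this, Nat.factorial_succ, ← this]
      have hsub : n + 1 - c = (n - c) + 1 := by omega
      rw [pow_succ, hsub, pow_succ]
      calc (c.factorial * (K - c).factorial) ^ n * (c.factorial * (K - c).factorial)
          ≤ (n.factorial * (K - n).factorial) ^ c * K.factorial ^ (n - c)
              * (c.factorial * (K - c).factorial) :=
            Nat.mul_le_mul_right _ ih'
        _ = (n.factorial ^ c * (K - (n+1)).factorial ^ c * K.factorial ^ (n - c))
              * (c.factorial * (K - c).factorial * (K - n) ^ c) := by
            rw [hfac]; ring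
        _ ≤ (n.factorial ^ c * (K - (n+1)).factorial ^ c * K.factorial ^ (n - c))
              * ((n + 1) ^ c * K.factorial) :=
            Nat.mul_le_mul_left _ hstep
        _ = ((n+1).factorial * (K - (n+1)).factorial) ^ c * (K.factorial ^ (n - c) * K.factorial) := by
            rw [Nat.factorial_succ, mul_pow, mul_pow]; ring

/-- For `1 ≤ m ≤ K` and `c : Fin K → ℕ` with `c i ≤ m` for all `i`, writing
`ℓ = ∑ i, c i`, we have
`∏ i, (c i)! (K − c i)! ≤ (m!)^⌊ℓ/m⌋ ((K−m)!)^⌊ℓ/m⌋ (K!)^(K − ⌊ℓ/m⌋)`. -/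
theorem stmt_3 (K m : ℕ) (hm : 1 ≤ m) (hmK : m ≤ K) (c : Fin K → ℕ)
    (hc : ∀ i, c i ≤ m) :
    ∏ i, Nat.factorial (c i) * Nat.factorial (K - c i)
      ≤ Nat.factorial m ^ ((∑ i, c i) / m) *
          Nat.factorial (K - m) ^ ((∑ i, c i) / m) *
          Nat.factorial K ^ (K - (∑ i, c i) / m) := by
  set L := ∑ i, c i with hL
  set q := L / m with hq
  have hLmK : L ≤ m * K := by
    rw [hL]
    calc ∑ i, c i ≤ ∑ _i : Fin K, m := Finset.sum_le_sum fun i _ => hc i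
      _ = K * m := by simp [Finset.sum_const, Finset.card_univ]
      _ = m * K := Nat.mul_comm _ _
  have hqK : q ≤ K := by
    rw [hq]
    calc L / m ≤ m * K / m := Nat.div_le_div_right hLmK
      _ = K := Nat.mul_div_cancel_left _ hm
  have hmqL : m * q ≤ L := by
    rw [hq, Nat.mul_comm]
    exact Nat.div_mul_le_self L m
  set A := m.factorial * (K - m).factorial with hA
  have hAK : A ≤ K.factorial :=
    Nat.le_of_dvd (Nat.factorial_pos K)
      (Nat.factorial_mul_factorial_dvd_factorial hmK)
  -- raise both sides to the m-th power
  rw [← Nat.pow_le_pow_iff_left (n := m) (by omega)]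
  calc (∏ i, (c i).factorial * (K - c i).factorial) ^ m
      = ∏ i, ((c i).factorial * (K - c i).factorial) ^ m := by
        rw [Finset.prod_pow]
    _ ≤ ∏ i, A ^ (c i) * K.factorial ^ (m - c i) :=
        Finset.prod_le_prod' fun i _ =>
          aux_key K m (c i) (hc i) hmK
    _ = A ^ L * K.factorial ^ (m * K - L) := by
        rw [Finset.prod_mul_distrib, Finset.prod_pow_eq_pow_sum,
          Finset.prod_pow_eq_pow_sum, ← hL]
        congr 1
        have h1 : (∑ i : Fin K, (m - c i)) + ∑ i : Fin K, c i = m * K := by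
          rw [← Finset.sum_add_distrib]
          calc ∑ i : Fin K, (m - c i + c i)
              = ∑ _i : Fin K, m :=
                Finset.sum_congr rfl fun i _ => by have := hc i; omega
            _ = K * m := by simp
            _ = m * K := Nat.mul_comm _ _
        have h2 : ∑ i : Fin K, (m - c i) = m * K - L := by
          rw [hL]; omega
        rw [h2]
    _ ≤ (m.factorial ^ q * (K - m).factorial ^ q * K.factorial ^ (K - q)) ^ m := by
        obtain ⟨d, hd⟩ : ∃ d, K = q + d := ⟨K - q, by omega⟩
        obtain ⟨e, he⟩ : ∃ e, L = m * q + e := ⟨L - m * q, by omega⟩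
        have heK : e + (m * K - L) = m * d := by
          have : m * K = m * q + m * d := by rw [hd, Nat.mul_add]
          omega
        have hKq : K - q = d := by omega
        calc A ^ L * K.factorial ^ (m * K - L)
            = A ^ (m * q) * (A ^ e * K.factorial ^ (m * K - L)) := by
              rw [he, pow_add]; ring
          _ ≤ A ^ (m * q) * (K.factorial ^ e * K.factorial ^ (m * K - L)) := by
              apply Nat.mul_le_mul_left
              exact Nat.mul_le_mul_right _ (Nat.pow_le_pow_left hAK e)
          _ = A ^ (m * q) * K.factorial ^ (m * d) := by
              rw [← pow_add, heK]
          _ = (m.factorial ^ q * (K - m).factorial ^ q * K.factorial ^ (K - q)) ^ m := by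
              rw [hA, hKq]
              rw [mul_pow, mul_pow, mul_pow, ← pow_mul, ← pow_mul, ← pow_mul]
              ring_nf
end

section
/- Let K be a natural number and let c = (c_1, …, c_K) be a vector of natural numbers with c_i ≤ K for all i. Suppose j ≠ k are indices with c_j ≥ c_k ≥ 1 and c_j ≤ K − 1, and define the vector c̃ by c̃_j = c_j + 1, c̃_k = c_k − 1, and c̃_i = c_i for i ∉ {j, k}. Then ∏_{i=1}^K c̃_i!·(K − c̃_i)! > ∏_{i=1}^K c_i!·(K − c_i)!; equivalently, (c_j + 1)·(K − c_k + 1) > c_k·(K − c_j). -/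
/-- Weight-shifting inequality: if `c j ≥ c k ≥ 1`, `c j ≤ K − 1` and `j ≠ k`, then moving
one unit of weight from column `k` to column `j` strictly increases
`∏ i, (c i)! (K − c i)!`; equivalently, `(c j + 1)(K − c k + 1) > c k (K − c j)`. -/
theorem stmt_4 (K : ℕ) (c : Fin K → ℕ) (hc : ∀ i, c i ≤ K) (j k : Fin K) (hjk : j ≠ k)
    (hk1 : 1 ≤ c k) (hkj : c k ≤ c j) (hjK : c j ≤ K - 1)
    (ctilde : Fin K → ℕ)
    (hct : ctilde = Function.update (Function.update c j (c j + 1)) k (c k - 1)) :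
    (∏ i, Nat.factorial (ctilde i) * Nat.factorial (K - ctilde i)
        > ∏ i, Nat.factorial (c i) * Nat.factorial (K - c i))
      ∧ (c j + 1) * (K - c k + 1) > c k * (K - c j) := by
  have hK1 : 1 ≤ K := j.pos
  obtain ⟨a, ha⟩ : ∃ a, c k = a + 1 := ⟨c k - 1, by omega⟩
  obtain ⟨d, hd⟩ : ∃ d, c j = a + 1 + d := ⟨c j - c k, by omega⟩
  obtain ⟨m, hm⟩ : ∃ m, K = a + 2 + d + m := by
    have := hc j
    exact ⟨K - (a + 2 + d), by omega⟩
  have hctj : ctilde j = a + 2 + d := by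
    rw [hct, Function.update_of_ne hjk, Function.update_self]; omega
  have hctk : ctilde k = a := by
    rw [hct, Function.update_self]; omega
  have hcti : ∀ i, i ≠ j → i ≠ k → ctilde i = c i := by
    intro i hij hik
    rw [hct, Function.update_of_ne hik, Function.update_of_ne hij]
  have key : (c j + 1) * (K - c k + 1) > c k * (K - c j) := by
    have h1 : c j + 1 = a + 2 + d := by omega
    have h2 : K - c k + 1 = d + m + 2 := by omega
    have h3 : c k = a + 1 := ha
    have h4 : K - c j = m + 1 := by omega
    rw [h1, h2, h3, h4]
    exact Nat.mul_lt_mul_of_lt_of_le (by omega) (by omega) (by omega)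
  refine ⟨?_, key⟩
  set g : Fin K → ℕ := fun i => Nat.factorial (ctilde i) * Nat.factorial (K - ctilde i) with hg
  set f : Fin K → ℕ := fun i => Nat.factorial (c i) * Nat.factorial (K - c i) with hf
  have hkmem : k ∈ Finset.univ.erase j := Finset.mem_erase.mpr ⟨Ne.symm hjk, Finset.mem_univ k⟩
  rw [← Finset.mul_prod_erase Finset.univ g (Finset.mem_univ j),
      ← Finset.mul_prod_erase _ g hkmem,
      ← Finset.mul_prod_erase Finset.univ f (Finset.mem_univ j),
      ← Finset.mul_prod_erase _ f hkmem]
  have hrest : ∏ i ∈ (Finset.univ.erase j).erase k, g i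
      = ∏ i ∈ (Finset.univ.erase j).erase k, f i := by
    refine Finset.prod_congr rfl fun i hi => ?_
    simp only [Finset.mem_erase] at hi
    simp only [hg, hf, hcti i hi.2.1 hi.1]
  rw [hrest]
  have hPpos : 0 < ∏ i ∈ (Finset.univ.erase j).erase k, f i :=
    Finset.prod_pos fun i _ => Nat.mul_pos (Nat.factorial_pos _) (Nat.factorial_pos _)
  have hfj : f j = Nat.factorial (a + 1 + d) * Nat.factorial (m + 1) := by
    simp only [hf]; rw [hd, show K - (a + 1 + d) = m + 1 by omega]
  have hfk : f k = Nat.factorial (a + 1) * Nat.factorial (d + m + 1) := by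
    simp only [hf]; rw [ha, show K - (a + 1) = d + m + 1 by omega]
  have hgj : g j = Nat.factorial (a + 2 + d) * Nat.factorial m := by
    simp only [hg]; rw [hctj, show K - (a + 2 + d) = m by omega]
  have hgk : g k = Nat.factorial a * Nat.factorial (d + m + 2) := by
    simp only [hg]; rw [hctk, show K - a = d + m + 2 by omega]
  have hmain : f j * f k < g j * g k := by
    rw [hfj, hfk, hgj, hgk]
    have e1 : Nat.factorial (a + 2 + d) = (a + 2 + d) * Nat.factorial (a + 1 + d) := by
      rw [show a + 2 + d = (a + 1 + d) + 1 by omega, Nat.factorial_succ]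
    have e2 : Nat.factorial (d + m + 2) = (d + m + 2) * Nat.factorial (d + m + 1) := by
      rw [show d + m + 2 = (d + m + 1) + 1 by omega, Nat.factorial_succ]
    have e3 : Nat.factorial (m + 1) = (m + 1) * Nat.factorial m := Nat.factorial_succ m
    have e4 : Nat.factorial (a + 1) = (a + 1) * Nat.factorial a := Nat.factorial_succ a
    rw [e1, e2, e3, e4]
    have hkey2 : (a + 1) * (m + 1) < (a + 2 + d) * (d + m + 2) :=
      Nat.mul_lt_mul_of_lt_of_le (by omega) (by omega) (by omega)
    have hC : 0 < Nat.factorial (a + 1 + d) * Nat.factorial m * Nat.factorial a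
        * Nat.factorial (d + m + 1) :=
        Nat.mul_pos (Nat.mul_pos (Nat.mul_pos (Nat.factorial_pos _) (Nat.factorial_pos _))
        (Nat.factorial_pos _)) (Nat.factorial_pos _)
    calc Nat.factorial (a + 1 + d) * ((m + 1) * Nat.factorial m)
          * ((a + 1) * Nat.factorial a * Nat.factorial (d + m + 1))
        = (a + 1) * (m + 1) * (Nat.factorial (a + 1 + d) * Nat.factorial m
            * Nat.factorial a * Nat.factorial (d + m + 1)) := by ring
      _ < (a + 2 + d) * (d + m + 2) * (Nat.factorial (a + 1 + d) * Nat.factorial m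
            * Nat.factorial a * Nat.factorial (d + m + 1)) :=
          Nat.mul_lt_mul_of_lt_of_le hkey2 le_rfl hC
      _ = (a + 2 + d) * Nat.factorial (a + 1 + d) * Nat.factorial m
            * (Nat.factorial a * ((d + m + 2) * Nat.factorial (d + m + 1))) := by ring
  show f j * (f k * ∏ i ∈ (Finset.univ.erase j).erase k, f i)
      < g j * (g k * ∏ i ∈ (Finset.univ.erase j).erase k, f i)
  calc f j * (f k * ∏ i ∈ (Finset.univ.erase j).erase k, f i)
      = f j * f k * ∏ i ∈ (Finset.univ.erase j).erase k, f i := by ring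
    _ < g j * g k * ∏ i ∈ (Finset.univ.erase j).erase k, f i :=
        Nat.mul_lt_mul_of_lt_of_le hmain le_rfl hPpos
    _ = g j * (g k * ∏ i ∈ (Finset.univ.erase j).erase k, f i) := by ring
end

section
/- Let K be a natural number, let c = (c_1, …, c_K) be a vector of natural numbers with c_i ≤ K for all i, set ℓ(c) = ∑_{i=1}^K c_i, and suppose ℓ(c) < K. Let j ≥ 1 be the number of indices i with c_i ≥ 1. Then ∏_{i=1}^K c_i!·(K − c_i)! ≤ (ℓ(c) − j + 1)!·(K − ℓ(c) + j − 1)!·((K − 1)!)^{j−1}·(K!)^{K−j}. -/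
/-!
The weight `x ↦ x! (K - x)!` is log-convex, so two nonzero entries `a, b` of `c` can be merged
into the pair `a + b - 1, 1` without decreasing the product: this pushes `a! b!` and
`(K - a)! (K - b)!` apart while keeping each sum of arguments fixed. Merging the `j` nonzero
entries one by one leaves the entries `ℓ - j + 1` and `j - 1` ones, while the zero entries
contribute `K!` each.
-/

open Nat Finset

theorem Finset.card_le_sum_of_one_le {ι : Type*} {s : Finset ι} {f : ι → ℕ}
    (hf : ∀ i ∈ s, 1 ≤ f i) : #s ≤ ∑ i ∈ s, f i := by
  simpa using s.card_nsmul_le_sum f 1 hf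

namespace Nat

theorem factorial_mul_factorial_le_pred_mul_succ {x y : ℕ} (hx : 1 ≤ x) (hxy : x ≤ y + 1) :
    x ! * y ! ≤ (x - 1)! * (y + 1)! := by
  obtain ⟨x, rfl⟩ := Nat.exists_eq_add_of_le' hx
  rw [Nat.add_sub_cancel, factorial_succ, factorial_succ]
  calc (x + 1) * x ! * y ! = x ! * ((x + 1) * y !) := by ring
    _ ≤ x ! * ((y + 1) * y !) := by gcongr

theorem factorial_mul_factorial_le_of_spread {x y u v : ℕ} (hux : u ≤ x) (hxy : x ≤ y + 1)
    (hsum : x + y = u + v) : x ! * y ! ≤ u ! * v ! := by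
  induction x generalizing y with
  | zero =>
    obtain rfl : u = 0 := by omega
    simp_all
  | succ x ih =>
    rcases hux.eq_or_lt with rfl | hlt
    · obtain rfl : y = v := by omega
      rfl
    calc (x + 1)! * y ! ≤ x ! * (y + 1)! := factorial_mul_factorial_le_pred_mul_succ (by omega) hxy
      _ ≤ u ! * v ! := ih (by omega) (by omega) (by omega)

end Nat

theorem factorial_mul_factorial_sub_merge_le {K a b : ℕ} (ha : 1 ≤ a) (hb : 1 ≤ b)
    (hab : a + b ≤ K + 1) :
    a ! * (K - a)! * (b ! * (K - b)!) ≤ (a + b - 1)! * (K - (a + b - 1))! * (K - 1)! := by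
  wlog hle : a ≤ b generalizing a b
  · rw [mul_comm, add_comm]
    exact this hb ha (by omega) (by omega)
  have hfac : a ! * b ! ≤ 1 ! * (a + b - 1)! :=
    factorial_mul_factorial_le_of_spread ha (by omega) (by omega)
  have hcofac : (K - b)! * (K - a)! ≤ (K - (a + b - 1))! * (K - 1)! :=
    factorial_mul_factorial_le_of_spread (by omega) (by omega) (by omega)
  calc a ! * (K - a)! * (b ! * (K - b)!) = (a ! * b !) * ((K - b)! * (K - a)!) := by ring
    _ ≤ (1 ! * (a + b - 1)!) * ((K - (a + b - 1))! * (K - 1)!) := Nat.mul_le_mul hfac hcofac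
    _ = (a + b - 1)! * (K - (a + b - 1))! * (K - 1)! := by rw [factorial_one]; ring

theorem prod_factorial_mul_factorial_sub_le {ι : Type*} {K : ℕ} {s : Finset ι} (hs : s.Nonempty)
    {f : ι → ℕ} (hf : ∀ i ∈ s, 1 ≤ f i) (hsum : ∑ i ∈ s, f i ≤ K) :
    ∏ i ∈ s, (f i)! * (K - f i)! ≤
      (∑ i ∈ s, f i - #s + 1)! * (K - (∑ i ∈ s, f i - #s + 1))! * (K - 1)! ^ (#s - 1) := by
  induction hs using Finset.Nonempty.cons_induction with
  | singleton a =>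
    obtain ⟨n, hn⟩ := Nat.exists_eq_add_of_le' (hf a (mem_singleton_self a))
    simp [hn]
  | cons a s ha hs ih =>
    rw [forall_mem_cons] at hf
    rw [sum_cons] at hsum ⊢
    have hcard := card_le_sum_of_one_le hf.2
    have hcard_pos : 1 ≤ #s := card_pos.mpr hs
    set m := ∑ i ∈ s, f i - #s + 1
    have hmerge := factorial_mul_factorial_sub_merge_le (K := K) hf.1 (le_add_left le_rfl : 1 ≤ m)
      (by omega)
    have hm : f a + ∑ i ∈ s, f i - (#s + 1) + 1 = f a + m - 1 := by omega
    rw [prod_cons, card_cons, hm, Nat.add_sub_cancel, ← Nat.sub_add_cancel hcard_pos, pow_succ']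
    calc (f a)! * (K - f a)! * ∏ i ∈ s, (f i)! * (K - f i)!
        ≤ (f a)! * (K - f a)! * (m ! * (K - m)! * (K - 1)! ^ (#s - 1)) := by
          gcongr; exact ih hf.2 (by omega)
      _ = (f a)! * (K - f a)! * (m ! * (K - m)!) * (K - 1)! ^ (#s - 1) := by ring
      _ ≤ (f a + m - 1)! * (K - (f a + m - 1))! * (K - 1)! * (K - 1)! ^ (#s - 1) := by
          gcongr
      _ = _ := by ring

theorem stmt_5_general (K : ℕ) (c : Fin K → ℕ)
    (hℓ : ∑ i, c i < K) (j : ℕ)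
    (hj : j = (Finset.univ.filter fun i => 1 ≤ c i).card) (hj1 : 1 ≤ j) :
    ∏ i, Nat.factorial (c i) * Nat.factorial (K - c i)
      ≤ Nat.factorial ((∑ i, c i) - j + 1) *
          Nat.factorial (K - (∑ i, c i) + j - 1) *
          Nat.factorial (K - 1) ^ (j - 1) *
          Nat.factorial K ^ (K - j) := by
  have hsum : ∑ i ∈ univ.filter (fun i => 1 ≤ c i), c i = ∑ i, c i :=
    sum_filter_of_ne fun i _ hi => Nat.one_le_iff_ne_zero.mpr hi
  have hzeros : ∏ i ∈ univ.filter (fun i => ¬ 1 ≤ c i), (c i)! * (K - c i)! = K ! ^ (K - j) := by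
    rw [prod_eq_pow_card (b := K !) fun i hi => by simp [show c i = 0 by simpa using hi]]
    have := card_filter_add_card_filter_not (s := univ) (fun i => 1 ≤ c i)
    rw [Finset.card_univ, Fintype.card_fin] at this
    congr 1; omega
  have hnonzeros := prod_factorial_mul_factorial_sub_le (K := K) (card_pos.mp (hj ▸ hj1))
    (fun i hi => (mem_filter.mp hi).2) (by omega)
  rw [hsum, ← hj] at hnonzeros
  have hcard : j ≤ ∑ i, c i := hj ▸ hsum ▸ card_le_sum_of_one_le fun i hi => (mem_filter.mp hi).2
  rw [← prod_filter_mul_prod_filter_not univ (fun i => 1 ≤ c i), hzeros,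
    show K - ∑ i, c i + j - 1 = K - (∑ i, c i - j + 1) by omega]
  gcongr

/-- For `c : Fin K → ℕ` with `c i ≤ K`, `ℓ = ∑ i, c i < K`, and `j ≥ 1` the number of
nonzero entries of `c`, we have
`∏ i, (c i)! (K − c i)! ≤ (ℓ − j + 1)! (K − ℓ + j − 1)! ((K−1)!)^(j−1) (K!)^(K−j)`. -/
theorem stmt_5 (K : ℕ) (c : Fin K → ℕ) (hc : ∀ i, c i ≤ K)
    (hℓ : ∑ i, c i < K) (j : ℕ)
    (hj : j = (Finset.univ.filter fun i => 1 ≤ c i).card) (hj1 : 1 ≤ j) :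
    ∏ i, Nat.factorial (c i) * Nat.factorial (K - c i)
      ≤ Nat.factorial ((∑ i, c i) - j + 1) *
          Nat.factorial (K - (∑ i, c i) + j - 1) *
          Nat.factorial (K - 1) ^ (j - 1) *
          Nat.factorial K ^ (K - j) :=
  stmt_5_general K c hℓ j hj hj1
end

section
/- Let K and m be natural numbers with 1 ≤ m ≤ K, and let c = (c_1, …, c_K) be a vector of natural numbers with c_i ≤ m for all i. Suppose j ≠ k are indices with m − 1 ≥ c_j ≥ c_k ≥ 1, and define c̃ by c̃_j = c_j + 1, c̃_k = c_k − 1, and c̃_i = c_i for i ∉ {j, k}. Then ∏_{i=1}^K ( C(m, c̃_i) / C(K, c̃_i) ) ≤ ∏_{i=1}^K ( C(m, c_i) / C(K, c_i) ); more precisely, the ratio of the left-hand side to the right-hand side equals (m − c_j)·(K − c_k + 1) / ( (m − c_k + 1)·(K − c_j) ), which is at most 1. -/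
set_option maxHeartbeats 1000000 in
/-- Weight-shifting identity for binomial ratios: if `m − 1 ≥ c j ≥ c k ≥ 1` and `j ≠ k`,
then moving one unit of weight from column `k` to column `j` changes the product
`∏ i, C(m, c i)/C(K, c i)` by the factor
`(m − c j)(K − c k + 1)/((m − c k + 1)(K − c j))`, which is at most `1`; in particular the
product decreases. -/
theorem stmt_7 (K m : ℕ) (hm : 1 ≤ m) (hmK : m ≤ K) (c : Fin K → ℕ)
    (hc : ∀ i, c i ≤ m) (j k : Fin K) (hjk : j ≠ k)
    (hk1 : 1 ≤ c k) (hkj : c k ≤ c j) (hjm : c j ≤ m - 1)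
    (ctilde : Fin K → ℕ)
    (hct : ctilde = Function.update (Function.update c j (c j + 1)) k (c k - 1)) :
    (∏ i, ((m.choose (ctilde i) : ℝ) / (K.choose (ctilde i) : ℝ))
        = (((m : ℝ) - c j) * ((K : ℝ) - c k + 1)) /
            ((((m : ℝ) - c k + 1)) * ((K : ℝ) - c j)) *
            ∏ i, ((m.choose (c i) : ℝ) / (K.choose (c i) : ℝ)))
      ∧ (((m : ℝ) - c j) * ((K : ℝ) - c k + 1)) /
            ((((m : ℝ) - c k + 1)) * ((K : ℝ) - c j)) ≤ 1
      ∧ ∏ i, ((m.choose (ctilde i) : ℝ) / (K.choose (ctilde i) : ℝ))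
          ≤ ∏ i, ((m.choose (c i) : ℝ) / (K.choose (c i) : ℝ)) := by
  have haj : c j + 1 ≤ m := by omega
  have hbm : c k ≤ m := le_trans hkj (hc j)
  -- split products
  have e1 : ∀ g : Fin K → ℝ, ∏ i, g i
      = g k * (g j * ∏ i ∈ (Finset.univ.erase k).erase j, g i) := by
    intro g
    rw [← Finset.mul_prod_erase _ _ (Finset.mem_univ k),
        ← Finset.mul_prod_erase _ _ (Finset.mem_erase.mpr ⟨hjk, Finset.mem_univ j⟩)]
  have hLt := e1 (fun i => ((m.choose (ctilde i) : ℝ) / (K.choose (ctilde i) : ℝ)))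
  have hLc := e1 (fun i => ((m.choose (c i) : ℝ) / (K.choose (c i) : ℝ)))
  have hrest : ∏ i ∈ (Finset.univ.erase k).erase j,
      ((m.choose (ctilde i) : ℝ) / (K.choose (ctilde i) : ℝ))
      = ∏ i ∈ (Finset.univ.erase k).erase j,
      ((m.choose (c i) : ℝ) / (K.choose (c i) : ℝ)) := by
    refine Finset.prod_congr rfl fun i hi => ?_
    simp only [Finset.mem_erase] at hi
    rw [hct, Function.update_of_ne hi.2.1, Function.update_of_ne hi.1]
  have hctk : ctilde k = c k - 1 := by rw [hct]; simp
  have hctj : ctilde j = c j + 1 := by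
    rw [hct, Function.update_of_ne hjk, Function.update_self]
  -- scalar identity
  have hmj0 : (m.choose (c j) : ℝ) ≠ 0 := by
    exact_mod_cast (Nat.choose_pos (hc j)).ne'
  have hKj0 : (K.choose (c j) : ℝ) ≠ 0 := by
    exact_mod_cast (Nat.choose_pos ((hc j).trans hmK)).ne'
  have hmk0 : (m.choose (c k) : ℝ) ≠ 0 := by
    exact_mod_cast (Nat.choose_pos hbm).ne'
  have hKk0 : (K.choose (c k) : ℝ) ≠ 0 := by
    exact_mod_cast (Nat.choose_pos (hbm.trans hmK)).ne'
  have hmj1 : (m.choose (c j + 1) : ℝ) ≠ 0 := by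
    exact_mod_cast (Nat.choose_pos haj).ne'
  have hKj1 : (K.choose (c j + 1) : ℝ) ≠ 0 := by
    exact_mod_cast (Nat.choose_pos (haj.trans hmK)).ne'
  have hmk1 : (m.choose (c k - 1) : ℝ) ≠ 0 := by
    exact_mod_cast (Nat.choose_pos (by omega : c k - 1 ≤ m)).ne'
  have hKk1 : (K.choose (c k - 1) : ℝ) ≠ 0 := by
    exact_mod_cast (Nat.choose_pos (by omega : c k - 1 ≤ K)).ne'
  have hden1 : ((m : ℝ) - c k + 1) > 0 := by
    have : (c k : ℝ) ≤ m := by exact_mod_cast hbm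
    linarith
  have hden2 : ((K : ℝ) - c j) > 0 := by
    have : (c j : ℝ) + 1 ≤ K := by exact_mod_cast haj.trans hmK
    linarith
  -- nat choose identities
  have n1 : m.choose (c j + 1) * (c j + 1) = m.choose (c j) * (m - c j) :=
    Nat.choose_succ_right_eq m (c j)
  have n2 : K.choose (c j + 1) * (c j + 1) = K.choose (c j) * (K - c j) :=
    Nat.choose_succ_right_eq K (c j)
  have n3 : m.choose (c k) * (c k) = m.choose (c k - 1) * (m - (c k - 1)) := by
    have := Nat.choose_succ_right_eq m (c k - 1)
    rwa [Nat.sub_add_cancel hk1] at this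
  have n4 : K.choose (c k) * (c k) = K.choose (c k - 1) * (K - (c k - 1)) := by
    have := Nat.choose_succ_right_eq K (c k - 1)
    rwa [Nat.sub_add_cancel hk1] at this
  have r1 : (m.choose (c j + 1) : ℝ) * ((c j : ℝ) + 1) = m.choose (c j) * ((m : ℝ) - c j) := by
    have h : ((m.choose (c j + 1)) : ℝ) * (((c j + 1 : ℕ)) : ℝ)
        = (m.choose (c j) : ℝ) * ((m - c j : ℕ) : ℝ) := by exact_mod_cast n1
    rw [Nat.cast_sub (hc j)] at h; push_cast at h; linarith
  have r2 : (K.choose (c j + 1) : ℝ) * ((c j : ℝ) + 1) = K.choose (c j) * ((K : ℝ) - c j) := by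
    have h : ((K.choose (c j + 1)) : ℝ) * (((c j + 1 : ℕ)) : ℝ)
        = (K.choose (c j) : ℝ) * ((K - c j : ℕ) : ℝ) := by exact_mod_cast n2
    rw [Nat.cast_sub ((hc j).trans hmK)] at h; push_cast at h; linarith
  have r3 : (m.choose (c k) : ℝ) * (c k : ℝ) = m.choose (c k - 1) * ((m : ℝ) - c k + 1) := by
    have h : ((m.choose (c k)) : ℝ) * ((c k : ℕ) : ℝ)
        = (m.choose (c k - 1) : ℝ) * ((m - (c k - 1) : ℕ) : ℝ) := by exact_mod_cast n3
    rw [Nat.cast_sub (by omega : c k - 1 ≤ m), Nat.cast_sub hk1] at h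
    push_cast at h; linarith
  have r4 : (K.choose (c k) : ℝ) * (c k : ℝ) = K.choose (c k - 1) * ((K : ℝ) - c k + 1) := by
    have h : ((K.choose (c k)) : ℝ) * ((c k : ℕ) : ℝ)
        = (K.choose (c k - 1) : ℝ) * ((K - (c k - 1) : ℕ) : ℝ) := by exact_mod_cast n4
    rw [Nat.cast_sub (by omega : c k - 1 ≤ K), Nat.cast_sub hk1] at h
    push_cast at h; linarith
  have hck0 : (c k : ℝ) ≠ 0 := by
    have : (1:ℝ) ≤ c k := by exact_mod_cast hk1
    linarith
  have hcj1 : ((c j : ℝ) + 1) ≠ 0 := by positivity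
  have keymul : ((m.choose (c k - 1) : ℝ) * (m.choose (c j + 1) : ℝ))
        * (((m : ℝ) - c k + 1) * ((K : ℝ) - c j))
        * ((K.choose (c k) : ℝ) * (K.choose (c j) : ℝ))
      = (((m : ℝ) - c j) * ((K : ℝ) - c k + 1))
        * ((m.choose (c k) : ℝ) * (m.choose (c j) : ℝ))
        * ((K.choose (c k - 1) : ℝ) * (K.choose (c j + 1) : ℝ)) := by
    apply mul_left_cancel₀ (mul_ne_zero hcj1 hck0)
    linear_combination
      ((K.choose (c k) : ℝ) * (c k) *
        ((m.choose (c k - 1) : ℝ) * (K.choose (c j) : ℝ) * (((m:ℝ) - c k + 1) * ((K:ℝ) - c j)))) * r1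
      + ((m.choose (c j) : ℝ) * ((m:ℝ) - c j) *
        ((m.choose (c k - 1) : ℝ) * (K.choose (c j) : ℝ) * (((m:ℝ) - c k + 1) * ((K:ℝ) - c j)))) * r4
      - ((K.choose (c j + 1) : ℝ) * ((c j : ℝ) + 1) *
        (((m:ℝ) - c j) * ((K:ℝ) - c k + 1) * (m.choose (c j) : ℝ) * (K.choose (c k - 1) : ℝ))) * r3
      - ((m.choose (c k - 1) : ℝ) * (((m:ℝ) - c k + 1)) *
        (((m:ℝ) - c j) * ((K:ℝ) - c k + 1) * (m.choose (c j) : ℝ) * (K.choose (c k - 1) : ℝ))) * r2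
  have key : (m.choose (c k - 1) : ℝ) / K.choose (c k - 1) *
      ((m.choose (c j + 1) : ℝ) / K.choose (c j + 1))
      = (((m : ℝ) - c j) * ((K : ℝ) - c k + 1)) /
            ((((m : ℝ) - c k + 1)) * ((K : ℝ) - c j)) *
        ((m.choose (c k) : ℝ) / K.choose (c k) * ((m.choose (c j) : ℝ) / K.choose (c j))) := by
    field_simp
    linear_combination keymul
  have hr1 : (((m : ℝ) - c j) * ((K : ℝ) - c k + 1)) /
            ((((m : ℝ) - c k + 1)) * ((K : ℝ) - c j)) ≤ 1 := by
    rw [div_le_one (mul_pos hden1 hden2)]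
    have hcjm : (c j : ℝ) + 1 ≤ m := by exact_mod_cast haj
    have hmk : (m : ℝ) ≤ K := by exact_mod_cast hmK
    have hba : (c k : ℝ) ≤ c j := by exact_mod_cast hkj
    have hb1 : (1:ℝ) ≤ c k := by exact_mod_cast hk1
    have hpos : (0:ℝ) ≤ ((K:ℝ) - m) * ((c j : ℝ) - c k + 1) :=
      mul_nonneg (by linarith) (by linarith)
    have hring : (((m:ℝ) - c k + 1)) * ((K:ℝ) - c j)
        - ((m:ℝ) - c j) * ((K:ℝ) - c k + 1)
        = ((K:ℝ) - m) * ((c j : ℝ) - c k + 1) := by ring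
    linarith
  have heq : ∏ i, ((m.choose (ctilde i) : ℝ) / (K.choose (ctilde i) : ℝ))
      = (((m : ℝ) - c j) * ((K : ℝ) - c k + 1)) /
          ((((m : ℝ) - c k + 1)) * ((K : ℝ) - c j)) *
          ∏ i, ((m.choose (c i) : ℝ) / (K.choose (c i) : ℝ)) := by
    rw [hLt, hLc, hrest, hctk, hctj]
    linear_combination
      (∏ i ∈ (Finset.univ.erase k).erase j,
        ((m.choose (c i) : ℝ) / (K.choose (c i) : ℝ))) * key
  refine ⟨heq, hr1, ?_⟩
  have hP : 0 ≤ ∏ i, ((m.choose (c i) : ℝ) / (K.choose (c i) : ℝ)) :=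
    Finset.prod_nonneg fun i _ => div_nonneg (by positivity) (by positivity)
  rw [heq]
  have := mul_le_mul_of_nonneg_right hr1 hP
  linarith
end

section
/- For every α ∈ (0, 1) there exists a positive constant C such that for all natural numbers K ≥ 2, ∑_{n=4}^{⌊K^α⌋} ∑_{j=2}^{n−2} [ (K − n + j − 1)!·(n − j + 1)! / (K^{j−1}·j!·(K − j)!) ] · C(n + K − 1, K) · (j/K)^n ≤ C·K^{−3+2α}. -/
/-!
Each summand is `O(K⁻³)` uniformly in `n ≤ K^α`. Up to a factor `4ⁿ`, the ratio
`(K-n+j-1)!/(K-j)!` is `K^(2j-n-1)` and `C(n+K-1, K)` is `K^(n-1)/(n-1)!`, so the summand is at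
most `4ⁿ (n-j+1)! jⁿ / (j! (n-1)! K^(n-j+1))`. With `(n-j+1)! (j-2)! ≤ (n-1)!`, `jʲ ≤ eʲ j!` and
`4j ≤ K` (true for large `K` because `α < 1`), this is at most `16 (4e)ʲ j² / ((j-2)! K³)`, and
`(4e)ʲ j² / (j-2)!` is bounded in `j`. There are at most `K^(2α)` summands, and the finitely many
small `K` are absorbed into the constant.
-/

open Finset Nat Real Filter

theorem factorial_mul_pow_le {a K : ℕ} (haK : a ≤ K) (hKa : K ≤ 2 * (a + 1)) (b : ℕ) :
    a ! * K ^ b ≤ 2 ^ (b - a) * b ! * K ^ a := by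
  rcases le_total b a with hba | hab
  · obtain ⟨d, rfl⟩ := Nat.exists_eq_add_of_le hba
    have hasc : (b + d)! ≤ b ! * K ^ d := by
      rw [← factorial_mul_ascFactorial]
      exact Nat.mul_le_mul_left _
        ((ascFactorial_le_pow_add b d).trans (Nat.pow_le_pow_left haK d))
    calc (b + d)! * K ^ b ≤ b ! * K ^ d * K ^ b := Nat.mul_le_mul_right _ hasc
      _ = 2 ^ (b - (b + d)) * b ! * K ^ (b + d) := by
        rw [Nat.sub_eq_zero_of_le (Nat.le_add_right b d)]; ring
  · obtain ⟨d, rfl⟩ := Nat.exists_eq_add_of_le hab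
    calc a ! * K ^ (a + d) = K ^ d * a ! * K ^ a := by ring
      _ ≤ (2 * (a + 1)) ^ d * a ! * K ^ a := by gcongr
      _ = 2 ^ d * (a ! * (a + 1) ^ d) * K ^ a := by rw [mul_pow]; ring
      _ ≤ 2 ^ (a + d - a) * (a + d)! * K ^ a := by
        rw [Nat.add_sub_cancel_left]; gcongr; exact factorial_mul_pow_le_factorial

theorem choose_add_left_le {K d : ℕ} (hd : d ≤ K) :
    ((K + d).choose K : ℝ) ≤ (2 * K) ^ d / d ! := by
  rw [choose_symm_add]
  calc ((K + d).choose d : ℝ) ≤ ((K + d : ℕ) : ℝ) ^ d / d ! := choose_le_pow_div d (K + d)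
    _ ≤ (2 * K) ^ d / d ! := by gcongr; push_cast; linarith [(Nat.cast_le (α := ℝ)).2 hd]

theorem pow_mul_sq_div_factorial_sub_two_le {c : ℝ} (hc : 0 ≤ c) {j : ℕ} (hj : 2 ≤ j) :
    c ^ j * j ^ 2 / (j - 2)! ≤ 4 * c ^ 2 * exp (4 * c) := by
  obtain ⟨k, rfl⟩ := Nat.exists_eq_add_of_le' hj
  have hk : ((k + 2 : ℕ) : ℝ) ≤ 2 * 2 ^ k := by
    have hlt := Nat.lt_two_pow_self (n := k + 1)
    rw [pow_succ] at hlt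
    exact_mod_cast (by omega : k + 2 ≤ 2 * 2 ^ k)
  rw [Nat.add_sub_cancel]
  calc c ^ (k + 2) * ((k + 2 : ℕ) : ℝ) ^ 2 / k ! ≤ c ^ (k + 2) * (2 * 2 ^ k) ^ 2 / k ! := by gcongr
    _ = 4 * c ^ 2 * ((4 * c) ^ k / k !) := by
        rw [mul_pow, mul_pow, ← pow_mul, mul_comm k 2, pow_mul]; ring
    _ ≤ 4 * c ^ 2 * exp (4 * c) := by gcongr; exact pow_div_factorial_le_exp _ (by positivity) k

noncomputable def summand (K n j : ℕ) : ℝ :=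
  ((Nat.factorial (K - n + j - 1) : ℝ) * (Nat.factorial (n - j + 1) : ℝ)) /
      ((K : ℝ) ^ (j - 1) * (Nat.factorial j : ℝ) * (Nat.factorial (K - j) : ℝ)) *
    ((n + K - 1).choose K : ℝ) * ((j : ℝ) / (K : ℝ)) ^ n

theorem summand_le {K n j : ℕ} (hj : 1 ≤ j) (hjn : j ≤ n) (hK : 2 * n ≤ K) :
    summand K n j ≤ 4 ^ n * (n - j + 1)! * j ^ n / (j ! * (n - 1)! * K ^ (n - j + 1)) := by
  have hKpos : (0 : ℝ) < K := by exact_mod_cast (by omega : 0 < K)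
  have hfac : ((K - n + j - 1)! : ℝ) * K ^ (K - j) ≤ 2 ^ n * (K - j)! * K ^ (K - n + j - 1) := by
    have h := factorial_mul_pow_le (a := K - n + j - 1) (K := K) (by omega) (by omega) (K - j)
    calc ((K - n + j - 1)! : ℝ) * K ^ (K - j)
        ≤ 2 ^ (K - j - (K - n + j - 1)) * (K - j)! * K ^ (K - n + j - 1) := by exact_mod_cast h
      _ ≤ 2 ^ n * (K - j)! * K ^ (K - n + j - 1) := by gcongr <;> norm_num; omega
  have hchoose : ((n + K - 1).choose K : ℝ) ≤ (2 * K) ^ (n - 1) / (n - 1)! := by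
    rw [show n + K - 1 = K + (n - 1) by omega]; exact choose_add_left_le (by omega)
  have hexp : (K : ℝ) ^ (K - j) * K ^ (j - 1) * K ^ n
      = K ^ (K - n + j - 1) * K ^ (n - 1) * K ^ (n - j + 1) := by
    simp only [← pow_add]; congr 1; omega
  calc summand K n j
      = ((K - n + j - 1)! * K ^ (K - j)) * (n + K - 1).choose K * ((n - j + 1)! * j ^ n) /
          (K ^ (K - j) * K ^ (j - 1) * j ! * (K - j)! * K ^ n) := by
        unfold summand; rw [div_pow]; field_simp
    _ ≤ (2 ^ n * (K - j)! * K ^ (K - n + j - 1)) * ((2 * K) ^ (n - 1) / (n - 1)!) *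
          ((n - j + 1)! * j ^ n) / (K ^ (K - j) * K ^ (j - 1) * j ! * (K - j)! * K ^ n) := by
        gcongr
    _ = 2 ^ n * 2 ^ (n - 1) * (n - j + 1)! * j ^ n / (j ! * (n - 1)! * K ^ (n - j + 1)) := by
        rw [mul_pow]; field_simp; exact hexp.symm
    _ ≤ 4 ^ n * (n - j + 1)! * j ^ n / (j ! * (n - 1)! * K ^ (n - j + 1)) := by
        gcongr
        calc (2 : ℝ) ^ n * 2 ^ (n - 1) ≤ 2 ^ n * 2 ^ n := by gcongr <;> norm_num
          _ = 4 ^ n := by rw [← mul_pow]; norm_num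

theorem four_pow_mul_div_le {K n j : ℕ} (hj : 2 ≤ j) (hjn : j + 2 ≤ n) (hK : 4 * j ≤ K) :
    (4 : ℝ) ^ n * (n - j + 1)! * j ^ n / (j ! * (n - 1)! * K ^ (n - j + 1))
      ≤ 16 * (4 * exp 1) ^ j * j ^ 2 / (j - 2)! / K ^ 3 := by
  obtain ⟨k, rfl⟩ := Nat.exists_eq_add_of_le' hj
  obtain ⟨i, rfl⟩ := Nat.exists_eq_add_of_le' hjn
  have hKpos : (0 : ℝ) < K := by exact_mod_cast (by omega : 0 < K)
  have hbinom : ((i + 3)! : ℝ) / (k + i + 3)! ≤ 1 / k ! := by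
    rw [div_le_div_iff₀ (by positivity) (by positivity), one_mul]
    have h := Nat.le_of_dvd (factorial_pos _) (factorial_mul_factorial_dvd_factorial_add (i + 3) k)
    rw [show i + 3 + k = k + i + 3 by ring] at h
    exact_mod_cast h
  have hpow_self : ((k + 2 : ℕ) : ℝ) ^ (k + 2) / (k + 2)! ≤ exp 1 ^ (k + 2) := by
    rw [← exp_nat_mul, mul_one]; exact pow_div_factorial_le_exp _ (by positivity) _
  have hpow : ((4 * (k + 2) : ℕ) : ℝ) ^ i ≤ K ^ i := by gcongr
  rw [show i + (k + 2 + 2) - (k + 2) + 1 = i + 3 by omega,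
    show i + (k + 2 + 2) - 1 = k + i + 3 by omega, Nat.add_sub_cancel]
  calc _
      = 16 * 4 ^ (k + 2) * ((k + 2 : ℕ) : ℝ) ^ 2 * (((k + 2 : ℕ) : ℝ) ^ (k + 2) / (k + 2)!) *
          (((i + 3)! : ℝ) / (k + i + 3)!) * (((4 * (k + 2) : ℕ) : ℝ) ^ i / K ^ i) / K ^ 3 := by
        push_cast [mul_pow]; field_simp; ring
    _ ≤ 16 * 4 ^ (k + 2) * ((k + 2 : ℕ) : ℝ) ^ 2 * exp 1 ^ (k + 2) * (1 / k !) *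
          (K ^ i / K ^ i) / K ^ 3 := by
        gcongr
    _ = 16 * (4 * exp 1) ^ (k + 2) * ((k + 2 : ℕ) : ℝ) ^ 2 / k ! / K ^ 3 := by
        rw [div_self (by positivity)]; ring

theorem exists_summand_le_div_pow_three :
    ∃ B : ℝ, 0 ≤ B ∧
      ∀ K n j : ℕ, 2 ≤ j → j + 2 ≤ n → 4 * n ≤ K → summand K n j ≤ B / K ^ 3 := by
  refine ⟨16 * (4 * (4 * exp 1) ^ 2 * exp (4 * (4 * exp 1))), by positivity,
    fun K n j hj hjn hK ↦ ?_⟩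
  calc summand K n j ≤ 4 ^ n * (n - j + 1)! * j ^ n / (j ! * (n - 1)! * K ^ (n - j + 1)) :=
        summand_le (by omega) (by omega) (by omega)
    _ ≤ 16 * (4 * exp 1) ^ j * j ^ 2 / (j - 2)! / K ^ 3 := four_pow_mul_div_le hj hjn (by omega)
    _ = 16 * ((4 * exp 1) ^ j * j ^ 2 / (j - 2)!) / K ^ 3 := by ring
    _ ≤ 16 * (4 * (4 * exp 1) ^ 2 * exp (4 * (4 * exp 1))) / K ^ 3 := by
        gcongr; exact pow_mul_sq_div_factorial_sub_two_le (by positivity) hj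

theorem exists_pos_forall_le_of_eventually_le {f g : ℕ → ℝ} {a : ℕ} (hg : ∀ K, a ≤ K → 0 < g K)
    (h : ∃ C, ∀ᶠ K in atTop, f K ≤ C * g K) : ∃ C, 0 < C ∧ ∀ K, a ≤ K → f K ≤ C * g K := by
  obtain ⟨C, hC⟩ := h
  obtain ⟨K₁, hK₁⟩ := eventually_atTop.1 hC
  set S := ∑ K ∈ range K₁, |f K| / |g K|
  have hS : 0 ≤ S := sum_nonneg fun _ _ ↦ by positivity
  refine ⟨max C 0 + S + 1, by positivity, fun K hK ↦ ?_⟩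
  have hgK := hg K hK
  rcases le_or_gt K₁ K with hlarge | hsmall
  · calc f K ≤ C * g K := hK₁ K hlarge
      _ ≤ (max C 0 + S + 1) * g K := by gcongr; linarith [le_max_left C 0]
  · have hfS : |f K| / |g K| ≤ S :=
      single_le_sum (f := fun K ↦ |f K| / |g K|) (fun _ _ ↦ by positivity) (mem_range.2 hsmall)
    calc f K ≤ |f K| / |g K| * g K := by
          rw [abs_of_pos hgK, div_mul_cancel₀ _ hgK.ne']; exact le_abs_self _
      _ ≤ (max C 0 + S + 1) * g K := by gcongr; linarith [le_max_right C 0]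

theorem eventually_four_mul_rpow_le {α : ℝ} (hα : α < 1) :
    ∀ᶠ K : ℕ in atTop, 4 * (K : ℝ) ^ α ≤ K := by
  have hlim : Tendsto (fun K : ℕ ↦ (K : ℝ) ^ (1 - α)) atTop atTop :=
    (tendsto_rpow_atTop (by linarith)).comp tendsto_natCast_atTop_atTop
  filter_upwards [hlim.eventually_ge_atTop 4, eventually_ge_atTop 1] with K hK hK1
  have hKpos : (0 : ℝ) < K := by exact_mod_cast hK1
  calc 4 * (K : ℝ) ^ α ≤ (K : ℝ) ^ (1 - α) * (K : ℝ) ^ α := by gcongr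
    _ = K := by rw [← rpow_add hKpos, sub_add_cancel, rpow_one]

theorem sum_Icc_sum_Icc_le {f : ℕ → ℕ → ℝ} {c : ℝ} (hc : 0 ≤ c) (M : ℕ)
    (h : ∀ n ∈ Icc 4 M, ∀ j ∈ Icc 2 (n - 2), f n j ≤ c) :
    ∑ n ∈ Icc 4 M, ∑ j ∈ Icc 2 (n - 2), f n j ≤ M * (M * c) := by
  have hinner : ∀ n ∈ Icc 4 M, ∑ j ∈ Icc 2 (n - 2), f n j ≤ M * c := fun n hn ↦ by
    refine (sum_le_card_nsmul _ _ _ (h n hn)).trans ?_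
    rw [nsmul_eq_mul, Nat.card_Icc]
    gcongr
    exact_mod_cast (by simp only [mem_Icc] at hn; omega : n - 2 + 1 - 2 ≤ M)
  refine (sum_le_card_nsmul _ _ _ hinner).trans ?_
  rw [nsmul_eq_mul, Nat.card_Icc]
  gcongr
  exact_mod_cast (by omega : M + 1 - 4 ≤ M)

/-- For every `α ∈ (0,1)` there is a positive constant `C` such that for all `K ≥ 2`,
`∑_{n=4}^{⌊K^α⌋} ∑_{j=2}^{n−2} ((K−n+j−1)! (n−j+1)! / (K^{j−1} j! (K−j)!)) C(n+K−1,K) (j/K)^n`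
is at most `C K^{−3+2α}`. -/
theorem stmt_8 (α : ℝ) (hα : α ∈ Set.Ioo (0 : ℝ) 1) :
    ∃ C : ℝ, 0 < C ∧ ∀ K : ℕ, 2 ≤ K →
      ∑ n ∈ Icc 4 ⌊(K : ℝ) ^ α⌋₊, ∑ j ∈ Icc 2 (n - 2),
          ((Nat.factorial (K - n + j - 1) : ℝ) * (Nat.factorial (n - j + 1) : ℝ)) /
              ((K : ℝ) ^ (j - 1) * (Nat.factorial j : ℝ) * (Nat.factorial (K - j) : ℝ)) *
            ((n + K - 1).choose K : ℝ) * ((j : ℝ) / (K : ℝ)) ^ n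
        ≤ C * (K : ℝ) ^ (-3 + 2 * α) := by
  obtain ⟨B, hB0, hB⟩ := exists_summand_le_div_pow_three
  refine exists_pos_forall_le_of_eventually_le
    (f := fun K ↦ ∑ n ∈ Icc 4 ⌊(K : ℝ) ^ α⌋₊, ∑ j ∈ Icc 2 (n - 2), summand K n j)
    (fun K hK ↦ rpow_pos_of_pos (by exact_mod_cast (by omega : 0 < K)) _) ⟨B, ?_⟩
  filter_upwards [eventually_four_mul_rpow_le hα.2, eventually_ge_atTop 1] with K hK hK1
  have hKpos : (0 : ℝ) < K := by exact_mod_cast hK1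
  have hM : (⌊(K : ℝ) ^ α⌋₊ : ℝ) ≤ (K : ℝ) ^ α := Nat.floor_le (by positivity)
  have hterm : ∀ n ∈ Icc 4 ⌊(K : ℝ) ^ α⌋₊, ∀ j ∈ Icc 2 (n - 2),
      summand K n j ≤ B / K ^ 3 := fun n hn j hj ↦ by
    simp only [mem_Icc] at hn hj
    have hnK : 4 * (n : ℝ) ≤ K := by linarith [(Nat.le_floor_iff (by positivity)).1 hn.2]
    exact hB K n j hj.1 (by omega) (by exact_mod_cast hnK)
  calc _ ≤ (⌊(K : ℝ) ^ α⌋₊ : ℝ) * (⌊(K : ℝ) ^ α⌋₊ * (B / K ^ 3)) :=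
        sum_Icc_sum_Icc_le (by positivity) _ hterm
    _ ≤ (K : ℝ) ^ α * ((K : ℝ) ^ α * (B / K ^ 3)) := by gcongr
    _ = B * (K : ℝ) ^ (-3 + 2 * α) := by
        rw [rpow_add hKpos, rpow_neg hKpos.le, rpow_ofNat, two_mul, rpow_add hKpos]; ring
end
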